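/- arXiv:1304.6489 — 3 statements merged into one kernel-verified Lean document; each statement's English description precedes it below -/
import Mathlib

section
/- For every real N > 0, the equation M²·(1 − (M/(2N))·ln(1 + 2N/M)) = 1 has exactly one solution M in the interval [1, ∞). -/
/-!
Write `L = log (1 + 2N/M)`. The left-hand side `f(M) = M² - M³ L / (2N)` is continuous on
`M > 0`, and both its monotonicity and its growth follow from the Padé-type bound
`log (1 + x) < x - x² / (3 (1 + x))` for `x > 0`: this bound makes
`f'(M) = 2M - 3M² L / (2N) + M² / (M + 2N)` positive and gives `f(M) > 2NM² / (3(M + 2N))`,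
so `f` tends to infinity. Since `f(1) = 1 - log (1 + 2N) / (2N) < 1`, the intermediate value
theorem yields a solution in `[1, ∞)`, and strict monotonicity makes it unique.
-/

open Real Set Filter

lemma log_one_add_lt_sub_sq_div {x : ℝ} (hx : 0 < x) :
    log (1 + x) < x - x ^ 2 / (3 * (1 + x)) := by
  set gap : ℝ → ℝ := fun y => y - y ^ 2 / (3 * (1 + y)) - log (1 + y)
  have hderiv : ∀ y : ℝ, -1 < y → HasDerivAt gap (y * (1 + 2 * y) / (3 * (1 + y) ^ 2)) y := by
    intro y hy
    have hy1 : 1 + y ≠ 0 := by linarith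
    have hlog : HasDerivAt (fun y : ℝ => log (1 + y)) (1 / (1 + y)) y := by
      simpa using ((hasDerivAt_id' y).const_add 1).log hy1
    have hquot := (hasDerivAt_pow 2 y).div (((hasDerivAt_id' y).const_add 1).const_mul 3)
      (mul_ne_zero three_ne_zero hy1)
    refine (((hasDerivAt_id' y).sub hquot).sub hlog).congr_deriv ?_
    field_simp
    ring
  have hmono : StrictMonoOn gap (Ici 0) := by
    refine strictMonoOn_of_deriv_pos (convex_Ici 0) ?_ ?_
    · exact fun y hy => (hderiv y (by linarith [mem_Ici.mp hy])).continuousAt.continuousWithinAt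
    · intro y hy
      rw [interior_Ici] at hy
      have hy : 0 < y := hy
      rw [(hderiv y (by linarith)).deriv]
      positivity
  have hgap := hmono self_mem_Ici hx.le hx
  simp only [gap] at hgap
  norm_num at hgap
  linarith

lemma log_one_add_two_mul_div_lt {N M : ℝ} (hN : 0 < N) (hM : 0 < M) :
    log (1 + 2 * N / M) < 2 * N / M - 4 * N ^ 2 / (3 * M * (M + 2 * N)) := by
  convert log_one_add_lt_sub_sq_div (div_pos (mul_pos two_pos hN) hM) using 1
  field_simp
  ring

noncomputable def heuristicLhs (N M : ℝ) : ℝ :=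
  M ^ 2 * (1 - M / (2 * N) * log (1 + 2 * N / M))

lemma hasDerivAt_heuristicLhs {N M : ℝ} (hN : 0 < N) (hM : 0 < M) :
    HasDerivAt (heuristicLhs N)
      (2 * M - 3 * M ^ 2 / (2 * N) * log (1 + 2 * N / M) + M ^ 2 / (M + 2 * N)) M := by
  have hinner : HasDerivAt (fun y : ℝ => 1 + 2 * N / y) (2 * N * -(M ^ 2)⁻¹) M := by
    simpa [div_eq_mul_inv] using ((hasDerivAt_inv hM.ne').const_mul (2 * N)).const_add 1
  have hlog := hinner.log (by positivity)
  have hprod := ((hasDerivAt_id' M).div_const (2 * N)).mul hlog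
  refine ((hasDerivAt_pow 2 M).mul (hprod.const_sub 1)).congr_deriv ?_
  simp only [Pi.mul_apply]
  field_simp
  ring

lemma continuousOn_heuristicLhs {N : ℝ} (hN : 0 < N) : ContinuousOn (heuristicLhs N) (Ioi 0) :=
  fun _ hM => (hasDerivAt_heuristicLhs hN hM).continuousAt.continuousWithinAt

lemma strictMonoOn_heuristicLhs {N : ℝ} (hN : 0 < N) : StrictMonoOn (heuristicLhs N) (Ioi 0) := by
  refine strictMonoOn_of_deriv_pos (convex_Ioi 0) (continuousOn_heuristicLhs hN) ?_
  intro M hM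
  rw [interior_Ioi] at hM
  have hM : 0 < M := hM
  rw [(hasDerivAt_heuristicLhs hN hM).deriv]
  have hbound := mul_lt_mul_of_pos_left (log_one_add_two_mul_div_lt hN hM)
    (by positivity : 0 < 3 * M ^ 2 / (2 * N))
  have hsum : 3 * M ^ 2 / (2 * N) * (2 * N / M - 4 * N ^ 2 / (3 * M * (M + 2 * N)))
      = 2 * M + M ^ 2 / (M + 2 * N) := by
    field_simp
    ring
  linarith

lemma lt_heuristicLhs {N M : ℝ} (hN : 0 < N) (hM : 0 < M) :
    2 * N * M ^ 2 / (3 * (M + 2 * N)) < heuristicLhs N M := by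
  have hbound := mul_lt_mul_of_pos_left (log_one_add_two_mul_div_lt hN hM)
    (by positivity : 0 < M ^ 3 / (2 * N))
  have hsub : M ^ 3 / (2 * N) * (2 * N / M - 4 * N ^ 2 / (3 * M * (M + 2 * N)))
      = M ^ 2 - 2 * N * M ^ 2 / (3 * (M + 2 * N)) := by
    field_simp
    ring
  have hlhs : heuristicLhs N M = M ^ 2 - M ^ 3 / (2 * N) * log (1 + 2 * N / M) := by
    unfold heuristicLhs
    ring
  linarith

lemma tendsto_heuristicLhs_atTop {N : ℝ} (hN : 0 < N) :
    Tendsto (heuristicLhs N) atTop atTop := by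
  refine tendsto_atTop_mono' atTop ?_ (tendsto_id.const_mul_atTop (by positivity : 0 < N / 3))
  filter_upwards [eventually_ge_atTop (2 * N)] with M hM
  have hM0 : 0 < M := by linarith
  refine le_trans ?_ (lt_heuristicLhs hN hM0).le
  rw [le_div_iff₀ (by positivity)]
  simp only [id]
  nlinarith [mul_pos hN hM0]

lemma heuristicLhs_one_lt {N : ℝ} (hN : 0 < N) : heuristicLhs N 1 < 1 := by
  have hlog : 0 < log (1 + 2 * N) := log_pos (by linarith)
  simp only [heuristicLhs, one_pow, one_mul, div_one]
  have : 0 < 1 / (2 * N) * log (1 + 2 * N) := by positivity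
  linarith

/-- For every real `N > 0`, the heuristic equation
`M²·(1 − (M/(2N))·ln(1 + 2N/M)) = 1` has exactly one solution `M ∈ [1, ∞)`. -/
theorem heuristic_equation_unique_solution (N : ℝ) (hN : 0 < N) :
    ∃! M : ℝ, M ∈ Set.Ici (1 : ℝ) ∧
      M ^ 2 * (1 - M / (2 * N) * Real.log (1 + 2 * N / M)) = 1 := by
  have hsub : Ici (1 : ℝ) ⊆ Ioi 0 := Ici_subset_Ioi.mpr one_pos
  obtain ⟨M, hM, hfM⟩ := intermediate_value_Ici ((continuousOn_heuristicLhs hN).mono hsub)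
    (tendsto_heuristicLhs_atTop hN) (mem_Ici.mpr (heuristicLhs_one_lt hN).le)
  refine ⟨M, ⟨hM, hfM⟩, fun y ⟨hy, hfy⟩ => ?_⟩
  exact (strictMonoOn_heuristicLhs hN).injOn (hsub hy) (hsub hM) (hfy.trans hfM.symm)
end

section
/- Let M̂(N) denote, for each real N > 0, the unique solution in [1, ∞) of M²·(1 − (M/(2N))·ln(1 + 2N/M)) = 1. Then N·M̂(N) → 1 as N → 0⁺, i.e. M̂(N) behaves like 1/N in the hard-core limit. -/
/-!
Put `x = 2N/M̂(N)`. The defining equation reads `M̂² (x - log (1 + x)) / x = 1`, so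
`N M̂ = x M̂² / 2 = x² / (2 (x - log (1 + x)))`. Since `M̂ ≥ 1`, `0 < x ≤ 2N → 0`, and the
second-order Taylor expansion `x - log (1 + x) = x² / 2 + O(x³)` gives `N M̂ → 1`.
-/

open Filter Topology Real

lemma tendsto_sub_log_one_add_div_sq :
    Tendsto (fun y : ℝ => (y - log (1 + y)) / y ^ 2) (𝓝[≠] 0) (𝓝 (1 / 2)) := by
  rw [← tendsto_sub_nhds_zero_iff]
  have hbound : Tendsto (fun y : ℝ => |y| / (1 - |y|)) (𝓝[≠] 0) (𝓝 0) := by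
    have h : Tendsto (fun y : ℝ => |y| / (1 - |y|)) (𝓝 0) (𝓝 (|0| / (1 - |0|))) :=
      (continuous_abs.tendsto (0 : ℝ)).div
      (tendsto_const_nhds.sub (continuous_abs.tendsto (0 : ℝ))) (by simp)
    simpa using h.mono_left nhdsWithin_le_nhds
  refine squeeze_zero_norm' ?_ hbound
  have hsmall : ∀ᶠ y in 𝓝[≠] (0 : ℝ), |y| < 1 := by
    refine eventually_nhdsWithin_of_eventually_nhds ?_
    simpa using (continuous_abs.tendsto (0 : ℝ)).eventually (gt_mem_nhds (by simp))
  filter_upwards [hsmall, self_mem_nhdsWithin] with y hy1 (hy0 : y ≠ 0)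
  -- `|log (1 + y) - y + y² / 2| ≤ |y|³ / (1 - |y|)`
  have htaylor := abs_log_sub_add_sum_range_le (x := -y) (by rwa [abs_neg]) 2
  norm_num [Finset.sum_range_succ] at htaylor
  have hy2 : 0 < y ^ 2 := by positivity
  calc ‖(y - log (1 + y)) / y ^ 2 - 1 / 2‖
      = |-y + y ^ 2 / 2 + log (1 + y)| / y ^ 2 := by
        rw [Real.norm_eq_abs, div_sub' hy2.ne', abs_div, abs_of_pos hy2, ← abs_neg]
        congr 2
        ring
    _ ≤ |y| ^ 3 / (1 - |y|) / y ^ 2 := by gcongr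
    _ = |y| / (1 - |y|) := by
        rw [← sq_abs y]
        field_simp

lemma tendsto_const_mul_div_nhdsGT_zero {f : ℝ → ℝ} {c : ℝ} (hc : 0 < c)
    (hf : ∀ N, 0 < N → 1 ≤ f N) :
    Tendsto (fun N => c * N / f N) (𝓝[>] 0) (𝓝[>] 0) := by
  have hpos : ∀ N ∈ Set.Ioi (0 : ℝ), 0 < c * N / f N := fun N hN =>
    div_pos (mul_pos hc hN) (one_pos.trans_le (hf N hN))
  have hle : ∀ N ∈ Set.Ioi (0 : ℝ), c * N / f N ≤ c * N := fun N hN =>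
    div_le_self (mul_pos hc hN).le (hf N hN)
  have hcN : Tendsto (fun N : ℝ => c * N) (𝓝[>] 0) (𝓝 0) := by
    simpa using ((continuous_const_mul c).tendsto 0).mono_left nhdsWithin_le_nhds
  refine tendsto_nhdsWithin_of_tendsto_nhds_of_eventually_within _
    (tendsto_of_tendsto_of_tendsto_of_le_of_le' tendsto_const_nhds hcN ?_ ?_) ?_
  · filter_upwards [self_mem_nhdsWithin] with N hN using (hpos N hN).le
  · filter_upwards [self_mem_nhdsWithin] with N hN using hle N hN
  · filter_upwards [self_mem_nhdsWithin] with N hN using hpos N hN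

lemma mul_eq_of_sq_mul_one_sub_log_eq_one {N M : ℝ} (hN : 0 < N) (hM : 0 < M)
    (h : M ^ 2 * (1 - M / (2 * N) * log (1 + 2 * N / M)) = 1) :
    N * M = (2 * ((2 * N / M - log (1 + 2 * N / M)) / (2 * N / M) ^ 2))⁻¹ := by
  set x := 2 * N / M with hx
  have hx0 : 0 < x := by positivity
  have hNM : N * M = x * M ^ 2 / 2 := by
    rw [hx]; field_simp
  have hkey : M ^ 2 * (x - log (1 + x)) = x := by
    rw [show M / (2 * N) = 1 / x by rw [hx]; field_simp] at h
    field_simp at h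
    linarith
  have hd : x - log (1 + x) ≠ 0 := by
    rintro hd
    rw [hd, mul_zero] at hkey
    exact hx0.ne hkey
  rw [hNM]
  field_simp
  linear_combination hkey

/-- If `Mhat N` is, for each `N > 0`, the unique solution in `[1, ∞)` of
`M²·(1 − (M/(2N))·ln(1 + 2N/M)) = 1`, then `N·Mhat N → 1` as `N → 0⁺`
(hard-core limit: `Mhat N ~ 1/N`). -/
theorem heuristic_hardcore_limit (Mhat : ℝ → ℝ)
    (hMhat : ∀ N : ℝ, 0 < N → Mhat N ∈ Set.Ici (1 : ℝ) ∧
      (Mhat N) ^ 2 * (1 - Mhat N / (2 * N) * Real.log (1 + 2 * N / Mhat N)) = 1) :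
    Tendsto (fun N => N * Mhat N) (nhdsWithin 0 (Set.Ioi 0)) (nhds 1) := by
  have hx : Tendsto (fun N => 2 * N / Mhat N) (𝓝[>] 0) (𝓝[≠] 0) :=
    (tendsto_const_mul_div_nhdsGT_zero two_pos fun N hN => (hMhat N hN).1).mono_right
      (nhdsWithin_mono _ fun _ hy => ne_of_gt hy)
  have hlim : Tendsto (fun N => (2 * ((2 * N / Mhat N - log (1 + 2 * N / Mhat N)) /
      (2 * N / Mhat N) ^ 2))⁻¹) (𝓝[>] 0) (𝓝 1) := by
    simpa using ((tendsto_sub_log_one_add_div_sq.comp hx).const_mul 2).inv₀ (by norm_num)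
  refine hlim.congr' ?_
  filter_upwards [self_mem_nhdsWithin] with N hN
  obtain ⟨hM1, hM⟩ := hMhat N hN
  exact (mul_eq_of_sq_mul_one_sub_log_eq_one hN (one_pos.trans_le hM1) hM).symm
end

section
/- For every integer K ≥ 2 there exist positive reals η₀, …, η_{K−1} satisfying η_k = (1/K)·Σ_{j=0}^{K−1} z(k,j)/η_j for every 0 ≤ k ≤ K−1, where z(k,j) := 1 − C(k,j)/C(K,j) and C(a,b) denotes the binomial coefficient with C(a,b) = 0 for b > a. -/
/-!
With `W k j = z(k,j) / K` the system reads `η = W *ᵥ η⁻¹`. Column `0` of `W` vanishes and every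
other entry is positive, so it suffices to solve the system for the positive submatrix on the
nonzero indices and to define `η 0` by its own equation.

For a positive matrix, `F x = W *ᵥ x⁻¹` is strictly antitone with `F (a • x) = a⁻¹ • F x`, so
`G = F ∘ F` is strictly monotone and positively homogeneous. Maximising the Collatz–Wielandt
function `x ↦ minᵢ G x i / x i` over a compact part of the simplex into which normalisation maps
the range of `G` gives a positive eigenvector `G x = a • x`. Then `F x` is a positive eigenvector
as well, positive eigenvectors of a strictly monotone homogeneous map are proportional, so
`F x = t • x`, and `√t • x` is a fixed point of `F`.
-/

open Finset Matrix

section PositiveEigenvector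

variable {ι : Type*} [Fintype ι] [Nonempty ι] {G : (ι → ℝ) → ι → ℝ}

theorem eigenvalue_lt_of_forall_ne_smul
    (hmono : ∀ x y, (∀ i, 0 < x i) → x < y → ∀ i, G x i < G y i)
    (hhom : ∀ a : ℝ, 0 < a → ∀ x, G (a • x) = a • G x)
    {x y : ι → ℝ} {a b : ℝ} (hx : ∀ i, 0 < x i) (hy : ∀ i, 0 < y i)
    (hGx : G x = a • x) (hGy : G y = b • y) (hne : ∀ t : ℝ, 0 < t → x ≠ t • y) :
    b < a := by
  obtain ⟨i₀, hi₀⟩ := Finite.exists_min fun i => x i / y i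
  set t := x i₀ / y i₀
  have ht : 0 < t := div_pos (hx i₀) (hy i₀)
  have hty : t • y < x :=
    lt_of_le_of_ne (fun i => (le_div_iff₀ (hy i)).1 (hi₀ i)) (hne t ht).symm
  have key := hmono (t • y) x (fun i => mul_pos ht (hy i)) hty i₀
  rw [hhom t ht, hGy, hGx] at key
  have hti₀ : t * y i₀ = x i₀ := div_mul_cancel₀ _ (hy i₀).ne'
  simp only [Pi.smul_apply, smul_eq_mul, mul_left_comm t, hti₀] at key
  exact lt_of_mul_lt_mul_right key (hx i₀).le

theorem exists_pos_eq_smul_of_eigenvector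
    (hmono : ∀ x y, (∀ i, 0 < x i) → x < y → ∀ i, G x i < G y i)
    (hhom : ∀ a : ℝ, 0 < a → ∀ x, G (a • x) = a • G x)
    {x y : ι → ℝ} {a b : ℝ} (hx : ∀ i, 0 < x i) (hy : ∀ i, 0 < y i)
    (hGx : G x = a • x) (hGy : G y = b • y) : ∃ t : ℝ, 0 < t ∧ x = t • y := by
  by_contra! hxy
  have hyx : ∀ t : ℝ, 0 < t → y ≠ t • x := by
    rintro t ht rfl
    exact hxy t⁻¹ (inv_pos.2 ht) (inv_smul_smul₀ ht.ne' x).symm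
  exact (eigenvalue_lt_of_forall_ne_smul hmono hhom hx hy hGx hGy hxy).not_gt
    (eigenvalue_lt_of_forall_ne_smul hmono hhom hy hx hGy hGx hyx)

theorem inv_sum_smul_mem_stdSimplex_inter_Ici {v : ι → ℝ} {κ : ℝ} (hv : ∀ i, 0 < v i)
    (hκ : ∀ i j, v i ≤ κ * v j) :
    (∑ j, v j)⁻¹ • v ∈ stdSimplex ℝ ι ∩ Set.Ici (fun _ => ((Fintype.card ι : ℝ) * κ)⁻¹) := by
  have hsum : 0 < ∑ j, v j := sum_pos (fun j _ => hv j) univ_nonempty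
  refine ⟨⟨fun i => mul_nonneg (inv_nonneg.2 hsum.le) (hv i).le, ?_⟩, fun i => ?_⟩
  · simp only [Pi.smul_apply, smul_eq_mul, ← mul_sum]
    exact inv_mul_cancel₀ hsum.ne'
  · have hle : ∑ j, v j ≤ Fintype.card ι * κ * v i :=
      calc ∑ j, v j ≤ ∑ _j : ι, κ * v i := sum_le_sum fun j _ => hκ j i
        _ = Fintype.card ι * κ * v i := by simp [mul_assoc]
    have hnκ : 0 < (Fintype.card ι : ℝ) * κ := pos_of_mul_pos_left (hsum.trans_le hle) (hv i).le
    rw [Pi.smul_apply, smul_eq_mul, inv_mul_eq_div, le_div_iff₀ hsum, inv_mul_le_iff₀ hnκ]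
    exact hle

noncomputable def collatzWielandt (G : (ι → ℝ) → ι → ℝ) (x : ι → ℝ) : ℝ :=
  univ.inf' univ_nonempty fun i => G x i / x i

theorem collatzWielandt_smul_le {x : ι → ℝ} (hx : ∀ i, 0 < x i) :
    collatzWielandt G x • x ≤ G x := fun i =>
  (le_div_iff₀ (hx i)).1 (inf'_le _ (mem_univ i))

theorem lt_collatzWielandt_iff {x : ι → ℝ} {r : ℝ} :
    r < collatzWielandt G x ↔ ∀ i, r < G x i / x i := by
  simp [collatzWielandt, lt_inf'_iff]

theorem continuousOn_collatzWielandt {s : Set (ι → ℝ)} (hG : ContinuousOn G s)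
    (hs : ∀ x ∈ s, ∀ i, 0 < x i) : ContinuousOn (collatzWielandt G) s :=
  ContinuousOn.finset_inf'_apply _ fun i _ =>
    ((continuous_apply i).comp_continuousOn hG).div (continuous_apply i).continuousOn
      fun x hx => (hs x hx i).ne'

theorem exists_pos_eigenvector (κ : ℝ) (hpos : ∀ x, (∀ i, 0 < x i) → ∀ i, 0 < G x i)
    (hcont : ContinuousOn G {x | ∀ i, 0 < x i})
    (hmono : ∀ x y, (∀ i, 0 < x i) → x < y → ∀ i, G x i < G y i)
    (hhom : ∀ a : ℝ, 0 < a → ∀ x, G (a • x) = a • G x)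
    (hratio : ∀ x, (∀ i, 0 < x i) → ∀ i j, G x i ≤ κ * G x j) :
    ∃ x, (∀ i, 0 < x i) ∧ ∃ a : ℝ, G x = a • x := by
  set D := stdSimplex ℝ ι ∩ Set.Ici (fun _ => ((Fintype.card ι : ℝ) * κ)⁻¹)
  have hnorm : ∀ x, (∀ i, 0 < x i) → (∑ j, G x j)⁻¹ • G x ∈ D := fun x hx =>
    inv_sum_smul_mem_stdSimplex_inter_Ici (hpos x hx) (hratio x hx)
  have hκ : 0 < κ := by
    obtain ⟨i⟩ := ‹Nonempty ι›
    exact one_pos.trans_le ((le_mul_iff_one_le_left (hpos 1 (fun _ => one_pos) i)).1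
      (hratio 1 (fun _ => one_pos) i i))
  have hD : ∀ x ∈ D, ∀ i, 0 < x i := fun x hx i =>
    lt_of_lt_of_le (by positivity) (hx.2 i)
  obtain ⟨x, hxD, hmax⟩ := ((isCompact_stdSimplex ℝ ι).inter_right isClosed_Ici).exists_isMaxOn
    ⟨_, hnorm 1 fun _ => one_pos⟩
    (continuousOn_collatzWielandt (hcont.mono fun x hx => hD x hx) hD)
  have hx := hD x hxD
  refine ⟨x, hx, collatzWielandt G x, ?_⟩
  -- Otherwise `G` turns `r • x < G x` into `r * G x i < G (G x) i` for all `i`, so the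
  -- normalisation of `G x` has a larger Collatz–Wielandt value than the maximiser `x`.
  by_contra hne
  set r := collatzWielandt G x
  have hr : 0 < r := lt_collatzWielandt_iff.2 fun i => div_pos (hpos x hx i) (hx i)
  have hlt := hmono (r • x) (G x) (fun i => mul_pos hr (hx i))
    (lt_of_le_of_ne (collatzWielandt_smul_le hx) (Ne.symm hne))
  rw [hhom r hr] at hlt
  set s := (∑ j, G x j)⁻¹
  have hs : 0 < s := inv_pos.2 (sum_pos (fun j _ => hpos x hx j) univ_nonempty)
  have hup : r < collatzWielandt G (s • G x) := lt_collatzWielandt_iff.2 fun i => by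
    rw [hhom s hs, Pi.smul_apply, Pi.smul_apply, smul_eq_mul, smul_eq_mul,
      mul_div_mul_left _ _ hs.ne', lt_div_iff₀ (hpos x hx i)]
    exact hlt i
  exact (show collatzWielandt G (s • G x) ≤ r from hmax (hnorm x hx)).not_gt hup

end PositiveEigenvector

namespace Matrix

variable {ι : Type*} [Fintype ι] {W : Matrix ι ι ℝ}

theorem mulVec_lt_mulVec_of_pos (hW : ∀ i j, 0 < W i j) {v w : ι → ℝ} (hvw : v < w) (i : ι) :
    (W *ᵥ v) i < (W *ᵥ w) i := by
  obtain ⟨hle, j, hj⟩ := Pi.lt_def.1 hvw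
  exact sum_lt_sum (fun k _ => mul_le_mul_of_nonneg_left (hle k) (hW i k).le)
    ⟨j, mem_univ j, mul_lt_mul_of_pos_left hj (hW i j)⟩

theorem mulVec_le_mul_mulVec {κ : ℝ} (hκ : ∀ i i' j, W i j ≤ κ * W i' j) {v : ι → ℝ} (hv : 0 ≤ v)
    (i i' : ι) : (W *ᵥ v) i ≤ κ * (W *ᵥ v) i' := by
  simp only [mulVec, dotProduct, mul_sum, ← mul_assoc]
  exact sum_le_sum fun j _ => mul_le_mul_of_nonneg_right (hκ i i' j) (hv j)

theorem mulVec_inv_smul (a : ℝ) (x : ι → ℝ) : W *ᵥ (a • x)⁻¹ = a⁻¹ • W *ᵥ x⁻¹ := by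
  rw [← mulVec_smul]
  congr 1
  ext j
  simp [mul_comm]

theorem mulVec_inv_pos [Nonempty ι] (hW : ∀ i j, 0 < W i j) {x : ι → ℝ} (hx : ∀ i, 0 < x i)
    (i : ι) : 0 < (W *ᵥ x⁻¹) i :=
  sum_pos (fun j _ => mul_pos (hW i j) (inv_pos.2 (hx j))) univ_nonempty

theorem continuousOn_mulVec_inv : ContinuousOn (fun x => W *ᵥ x⁻¹) {x : ι → ℝ | ∀ i, 0 < x i} :=
  (continuous_const.matrix_mulVec continuous_id).comp_continuousOn
    (continuousOn_pi.2 fun j => (continuous_apply j).continuousOn.inv₀ fun _ hx => (hx j).ne')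

theorem mulVec_inv_lt_mulVec_inv (hW : ∀ i j, 0 < W i j) {x y : ι → ℝ}
    (hx : ∀ i, 0 < x i) (hxy : x < y) (i : ι) : (W *ᵥ y⁻¹) i < (W *ᵥ x⁻¹) i := by
  obtain ⟨hle, j, hj⟩ := Pi.lt_def.1 hxy
  exact mulVec_lt_mulVec_of_pos hW
    (Pi.lt_def.2 ⟨fun k => inv_anti₀ (hx k) (hle k), j, inv_strictAnti₀ (hx j) hj⟩) i

theorem mulVec_inv_mulVec_inv_lt [Nonempty ι] (hW : ∀ i j, 0 < W i j) {x y : ι → ℝ}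
    (hx : ∀ i, 0 < x i) (hxy : x < y) (i : ι) :
    (W *ᵥ (W *ᵥ x⁻¹)⁻¹) i < (W *ᵥ (W *ᵥ y⁻¹)⁻¹) i := by
  have hyx := mulVec_inv_lt_mulVec_inv hW hx hxy
  exact mulVec_inv_lt_mulVec_inv hW (mulVec_inv_pos hW fun i => (hx i).trans_le (hxy.le i))
    (Pi.lt_def.2 ⟨fun i => (hyx i).le, Classical.arbitrary ι, hyx _⟩) i

theorem exists_forall_le_mul_of_pos [Nonempty ι] (hW : ∀ i j, 0 < W i j) :
    ∃ κ : ℝ, ∀ i i' j, W i j ≤ κ * W i' j := by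
  obtain ⟨⟨i₀, i₁, j₀⟩, hmax⟩ :=
    Finite.exists_max fun p : ι × ι × ι => W p.1 p.2.2 / W p.2.1 p.2.2
  exact ⟨W i₀ j₀ / W i₁ j₀, fun i i' j => (div_le_iff₀ (hW i' j)).1 (hmax (i, i', j))⟩

theorem exists_pos_mulVec_inv_eq_self [Nonempty ι] (hW : ∀ i j, 0 < W i j) :
    ∃ x : ι → ℝ, (∀ i, 0 < x i) ∧ W *ᵥ x⁻¹ = x := by
  set F : (ι → ℝ) → ι → ℝ := fun x => W *ᵥ x⁻¹
  have hFpos : ∀ x, (∀ i, 0 < x i) → ∀ i, 0 < F x i := fun x hx => mulVec_inv_pos hW hx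
  have hGhom : ∀ a : ℝ, 0 < a → ∀ x, F (F (a • x)) = a • F (F x) := fun a _ x => by
    simp only [F, mulVec_inv_smul, inv_inv]
  have hGmono : ∀ x y, (∀ i, 0 < x i) → x < y → ∀ i, F (F x) i < F (F y) i :=
    fun _ _ hx hxy => mulVec_inv_mulVec_inv_lt hW hx hxy
  obtain ⟨κ, hκ⟩ := exists_forall_le_mul_of_pos hW
  obtain ⟨x, hx, a, hGx⟩ := exists_pos_eigenvector (G := F ∘ F) κ
    (fun x hx => hFpos _ (hFpos x hx))
    (continuousOn_mulVec_inv.comp continuousOn_mulVec_inv fun x hx => hFpos x hx) hGmono hGhom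
    (fun x hx => mulVec_le_mul_mulVec hκ fun j => (inv_pos.2 (hFpos x hx j)).le)
  have hGFx : F (F (F x)) = a⁻¹ • F x := by
    rw [show F (F x) = a • x from hGx]
    exact mulVec_inv_smul a x
  obtain ⟨t, ht, hFx⟩ := exists_pos_eq_smul_of_eigenvector hGmono hGhom (hFpos x hx) hx hGFx hGx
  have hsqrt : 0 < √t := Real.sqrt_pos.2 ht
  refine ⟨√t • x, fun i => mul_pos hsqrt (hx i), ?_⟩
  rw [mulVec_inv_smul, show W *ᵥ x⁻¹ = t • x from hFx, smul_smul, inv_mul_eq_div,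
    div_eq_iff hsqrt.ne' |>.2 (Real.mul_self_sqrt ht.le).symm]

theorem exists_pos_mulVec_inv_eq_self_of_zero_cols {p : ι → Prop} [Nonempty {j // p j}]
    (hW : ∀ i j, p j → 0 < W i j) (hW₀ : ∀ i j, ¬p j → W i j = 0) :
    ∃ x : ι → ℝ, (∀ i, 0 < x i) ∧ W *ᵥ x⁻¹ = x := by
  classical
  obtain ⟨y, hy, hWy⟩ := exists_pos_mulVec_inv_eq_self (W := W.submatrix Subtype.val Subtype.val)
    fun i j => hW i.1 j.1 j.2
  set x := W.submatrix id Subtype.val *ᵥ y⁻¹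
  have hxy : ∀ j : {j // p j}, x j = y j := fun j => congrFun hWy j
  refine ⟨x, fun i => sum_pos (fun j _ => mul_pos (hW i j j.2) (inv_pos.2 (hy j))) univ_nonempty,
    funext fun i => ?_⟩
  rw [mulVec, dotProduct, ← Fintype.sum_subtype_add_sum_subtype p, Fintype.sum_eq_zero (fun j : {j // ¬p j} => W i j * x⁻¹ j)
    fun j => by rw [hW₀ i j j.2, zero_mul], add_zero]
  simp only [Pi.inv_apply, hxy]
  rfl

end Matrix

theorem Nat.choose_lt_choose_of_lt {k n j : ℕ} (hkn : k < n) (hj : 0 < j) (hjn : j ≤ n) :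
    k.choose j < n.choose j := by
  obtain ⟨m, rfl⟩ := Nat.exists_eq_add_one_of_ne_zero (by omega : n ≠ 0)
  obtain ⟨i, rfl⟩ := Nat.exists_eq_add_one_of_ne_zero hj.ne'
  have := Nat.choose_pos (by omega : i ≤ m)
  have := Nat.choose_le_choose (i + 1) (by omega : k ≤ m)
  rw [Nat.choose_succ_succ']
  omega

/-- Existence of a positive solution of the many-to-one chunk fixed-point system: for
every integer `K ≥ 2` there exist positive reals `η₀, …, η_{K−1}` with
`η k = (1/K)·Σ_j z(k,j)/η j`, where `z(k,j) = 1 − C(k,j)/C(K,j)`. -/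
theorem chunk_fixed_point_exists (K : ℕ) (hK : 2 ≤ K) :
    ∃ η : Fin K → ℝ, (∀ k, 0 < η k) ∧
      ∀ k : Fin K, η k =
        (1 / K) * ∑ j : Fin K,
          (1 - ((k : ℕ).choose j : ℝ) / (K.choose j : ℝ)) / η j := by
  have : Nonempty {j : Fin K // (j : ℕ) ≠ 0} := ⟨⟨⟨1, hK⟩, one_ne_zero⟩⟩
  set W : Matrix (Fin K) (Fin K) ℝ :=
    fun k j => 1 / K * (1 - ((k : ℕ).choose j : ℝ) / (K.choose j : ℝ))
  have hW : ∀ k j : Fin K, (j : ℕ) ≠ 0 → 0 < W k j := by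
    intro k j hj
    have hKj : 0 < (K.choose j : ℝ) := by exact_mod_cast Nat.choose_pos j.2.le
    have hkj : ((k : ℕ).choose j : ℝ) < K.choose j := by
      exact_mod_cast Nat.choose_lt_choose_of_lt k.2 (Nat.pos_of_ne_zero hj) j.2.le
    have hK₀ : (0 : ℝ) < K := by exact_mod_cast (by omega : 0 < K)
    exact mul_pos (one_div_pos.2 hK₀) (sub_pos.2 ((div_lt_one hKj).2 hkj))
  have hW₀ : ∀ k j : Fin K, ¬(j : ℕ) ≠ 0 → W k j = 0 := fun k j hj => by
    simp [W, not_not.1 hj]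
  obtain ⟨η, hη, hfix⟩ := exists_pos_mulVec_inv_eq_self_of_zero_cols hW hW₀
  refine ⟨η, hη, fun k => ?_⟩
  conv_lhs => rw [← hfix]
  simp [W, mulVec, dotProduct, mul_sum, div_eq_mul_inv, mul_assoc]
end
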